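/- arXiv:1606.00312 — 2 statements merged into one kernel-verified Lean document; each statement's English description precedes it below -/
import Mathlib

section
/- Let (G,Ω) be an o-2 transitive ℓ-permutation group and let g,h ∈ G with h ≠ 1 and supp(h) ∩ supp(h^g) = ∅. Then there are elements f,k ∈ G such that [h⁻¹,h^f]·[h^{-g},h^{gk}] ≠ [h^{-g},h^{gk}]·[h⁻¹,h^f], where h^{-g} denotes (h^g)⁻¹. -/
/-!  Common framework for ℓ-permutation groups on a totally ordered set. -/

namespace LPerm

variable {Ω : Type*} [LinearOrder Ω]

/-- Pointwise join of two order automorphisms of a totally ordered set. -/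
def autSup (f g : Ω ≃o Ω) : Ω ≃o Ω :=
  Equiv.toOrderIso
    { toFun := fun α => max (f α) (g α)
      invFun := fun α => min (f.symm α) (g.symm α)
      left_inv := by
        intro α
        dsimp only
        rcases le_total (f α) (g α) with h | h
        · rw [max_eq_right h]
          have h1 : α ≤ f.symm (g α) := by
            have := f.symm.monotone h
            simpa using this
          rw [g.symm_apply_apply, min_eq_right h1]
        · rw [max_eq_left h]
          have h1 : α ≤ g.symm (f α) := by
            have := g.symm.monotone h
            simpa using this
          rw [f.symm_apply_apply, min_eq_left h1]
      right_inv := by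
        intro α
        dsimp only
        rcases le_total (f.symm α) (g.symm α) with h | h
        · rw [min_eq_left h]
          have h1 : g (f.symm α) ≤ α := by
            have := g.monotone h
            simpa using this
          rw [f.apply_symm_apply, max_eq_left h1]
        · rw [min_eq_right h]
          have h1 : f (g.symm α) ≤ α := by
            have := f.monotone h
            simpa using this
          rw [g.apply_symm_apply, max_eq_right h1] }
    (f.monotone.max g.monotone)
    (f.symm.monotone.min g.symm.monotone)

/-- Pointwise meet of two order automorphisms of a totally ordered set. -/
def autInf (f g : Ω ≃o Ω) : Ω ≃o Ω :=
  Equiv.toOrderIso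
    { toFun := fun α => min (f α) (g α)
      invFun := fun α => max (f.symm α) (g.symm α)
      left_inv := by
        intro α
        dsimp only
        rcases le_total (f α) (g α) with h | h
        · rw [min_eq_left h]
          have h1 : g.symm (f α) ≤ α := by
            have := g.symm.monotone h
            simpa using this
          rw [f.symm_apply_apply, max_eq_left h1]
        · rw [min_eq_right h]
          have h1 : f.symm (g α) ≤ α := by
            have := f.symm.monotone h
            simpa using this
          rw [g.symm_apply_apply, max_eq_right h1]
      right_inv := by
        intro α
        dsimp only
        rcases le_total (f.symm α) (g.symm α) with h | h
        · rw [max_eq_right h]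
          have h1 : α ≤ f (g.symm α) := by
            have := f.monotone h
            simpa using this
          rw [g.apply_symm_apply, min_eq_right h1]
        · rw [max_eq_left h]
          have h1 : α ≤ g (f.symm α) := by
            have := g.monotone h
            simpa using this
          rw [f.apply_symm_apply, min_eq_left h1] }
    (f.monotone.min g.monotone)
    (f.symm.monotone.max g.symm.monotone)


/-- The pointwise order on order automorphisms: `f ≤ g` iff `f α ≤ g α` for all `α`. -/
def autLe (f g : Ω ≃o Ω) : Prop := ∀ α : Ω, f α ≤ g α

/-- `|g| = g ∨ g⁻¹`. -/
def autAbs (g : Ω ≃o Ω) : Ω ≃o Ω := autSup g g⁻¹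

/-- The support of an automorphism. -/
def supp (g : Ω ≃o Ω) : Set Ω := {α | g α ≠ α}

/-- Conjugation, written `h^g = g⁻¹ h g` in the paper. -/
def aconj (h g : Ω ≃o Ω) : Ω ≃o Ω := g⁻¹ * h * g

/-- The commutator `[a,b] = a⁻¹ b⁻¹ a b`. -/
def pcomm (a b : Ω ≃o Ω) : Ω ≃o Ω := a⁻¹ * b⁻¹ * a * b

/-- `G` is closed under the pointwise lattice operations, i.e. `(G,Ω)` is an
ℓ-permutation group. -/
def SublatticeClosed (G : Subgroup (Ω ≃o Ω)) : Prop :=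
  ∀ f g : Ω ≃o Ω, f ∈ G → g ∈ G → autSup f g ∈ G ∧ autInf f g ∈ G

/-- `(G,Ω)` is transitive. -/
def IsTransitive (G : Subgroup (Ω ≃o Ω)) : Prop :=
  ∀ α β : Ω, ∃ g ∈ G, g α = β

/-- `(G,Ω)` is o-2 transitive. -/
def IsO2Transitive (G : Subgroup (Ω ≃o Ω)) : Prop :=
  ∀ α₁ α₂ β₁ β₂ : Ω, α₁ < α₂ → β₁ < β₂ → ∃ g ∈ G, g α₁ = β₁ ∧ g α₂ = β₂

/-- A convex `G`-congruence: an equivalence relation with convex classes which is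
preserved by the action of `G`. -/
def IsConvexCongruence (G : Subgroup (Ω ≃o Ω)) (r : Ω → Ω → Prop) : Prop :=
  Equivalence r ∧ (∀ α β γ : Ω, r α γ → α ≤ β → β ≤ γ → r α β) ∧
    ∀ g ∈ G, ∀ α β : Ω, r α β → r (g α) (g β)

/-- `V(α,β)`: the intersection of all convex `G`-congruences under which `α` and `β`
are equivalent. -/
def Vcong (G : Subgroup (Ω ≃o Ω)) (α β : Ω) : Ω → Ω → Prop :=
  fun γ δ => ∀ r : Ω → Ω → Prop, IsConvexCongruence G r → r α β → r γ δ

/-- Membership in the spine `𝔎` of `(G,Ω)`. -/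
def SpineMem (G : Subgroup (Ω ≃o Ω)) (r : Ω → Ω → Prop) : Prop :=
  ∃ α β : Ω, α ≠ β ∧ r = Vcong G α β

/-- Inclusion of relations. -/
def relLe (r s : Ω → Ω → Prop) : Prop := ∀ x y : Ω, r x y → s x y

/-- `Δ ∈ T`: `Δ` is an o-block (class) of a member of the spine `𝔎`. -/
def InT (G : Subgroup (Ω ≃o Ω)) (Δ : Set Ω) : Prop :=
  ∃ r : Ω → Ω → Prop, SpineMem G r ∧ ∃ δ : Ω, Δ = {γ | r δ γ}

/-- `Δ` is a class (o-block) of the relation `r`. -/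
def IsBlockOf (r : Ω → Ω → Prop) (Δ : Set Ω) : Prop :=
  ∃ δ : Ω, Δ = {γ | r δ γ}

/-- The restricted stabiliser `rst(S) = {g ∈ G ∣ supp g ⊆ S}`. -/
def rst (G : Subgroup (Ω ≃o Ω)) (S : Set Ω) : Set (Ω ≃o Ω) :=
  {g | g ∈ G ∧ supp g ⊆ S}

/-- The (setwise) stabiliser `st(Δ) = {g ∈ G ∣ Δg = Δ}`. -/
def stab (G : Subgroup (Ω ≃o Ω)) (Δ : Set Ω) : Set (Ω ≃o Ω) :=
  {g | g ∈ G ∧ g '' Δ = Δ}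

/-- `Q_Δ = {h ∈ rst(Δ) ∣ ∃ α ∈ Δ, V(α, αh) = κ(Δ)}`; since `κ(Δ)` is the unique
convex congruence having `Δ` as a class, the condition `V(α,αh) = κ(Δ)` says exactly
that `Δ` is the class of `V(α, αh)` containing `α`. -/
def Qset (G : Subgroup (Ω ≃o Ω)) (Δ : Set Ω) : Set (Ω ≃o Ω) :=
  {h | h ∈ rst G Δ ∧ ∃ α ∈ Δ, Δ = {γ | Vcong G α (h α) α γ}}

/-- `(G,Ω)` is ample: `Q_Δ ≠ ∅` for every `Δ ∈ T`. -/
def Ample (G : Subgroup (Ω ≃o Ω)) : Prop :=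
  ∀ Δ : Set Ω, InT G Δ → (Qset G Δ).Nonempty

/-- `(G,Ω)` is abundant: for every `Δ ∈ T` and `g ∈ st(Δ)`, the automorphism
`dep(g,Δ)` agreeing with `g` on `Δ` and with the identity elsewhere lies in `G`. -/
def Abundant (G : Subgroup (Ω ≃o Ω)) : Prop :=
  ∀ Δ : Set Ω, InT G Δ → ∀ g ∈ stab G Δ,
    ∃ g₀ ∈ G, (∀ α ∈ Δ, g₀ α = g α) ∧ ∀ α ∉ Δ, g₀ α = α

/-- The spine `𝔎` has no minimal element. -/
def SpineNoMin (G : Subgroup (Ω ≃o Ω)) : Prop :=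
  ∀ r : Ω → Ω → Prop, SpineMem G r →
    ∃ r' : Ω → Ω → Prop, SpineMem G r' ∧ relLe r' r ∧ r' ≠ r

/-- `Δ` is a minimal element of `T`. -/
def MinimalInT (G : Subgroup (Ω ≃o Ω)) (Δ : Set Ω) : Prop :=
  InT G Δ ∧ ∀ Δ' : Set Ω, InT G Δ' → Δ' ⊆ Δ → Δ' = Δ

/-- Hypothesis (†): if `T` has a minimal element `Δ₀`, then every (nondegenerate
bounded) interval of `Δ₀` supports a non-trivial element of `G`. -/
def Dagger (G : Subgroup (Ω ≃o Ω)) : Prop :=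
  ∀ Δ₀ : Set Ω, MinimalInT G Δ₀ → ∀ α β : Ω, α ∈ Δ₀ → β ∈ Δ₀ → α < β →
    ∃ g : Ω ≃o Ω, g ∈ G ∧ g ≠ 1 ∧ supp g ⊆ Set.Ioo α β

/-- `X_h = {[h⁻¹, h^g] ∣ g ∈ G}`. -/
def Xset (G : Subgroup (Ω ≃o Ω)) (h : Ω ≃o Ω) : Set (Ω ≃o Ω) :=
  {x | ∃ g ∈ G, x = pcomm h⁻¹ (aconj h g)}

/-- `W_h = ⋃ {X_{h^g} ∣ g ∈ G, [X_h, X_{h^g}] ≠ 1}`. -/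
def Wset (G : Subgroup (Ω ≃o Ω)) (h : Ω ≃o Ω) : Set (Ω ≃o Ω) :=
  {x | ∃ g ∈ G, (∃ a ∈ Xset G h, ∃ b ∈ Xset G (aconj h g), pcomm a b ≠ 1) ∧
    x ∈ Xset G (aconj h g)}

/-- The centraliser of a subset `S` in `G`. -/
def cent (G : Subgroup (Ω ≃o Ω)) (S : Set (Ω ≃o Ω)) : Set (Ω ≃o Ω) :=
  {f | f ∈ G ∧ ∀ s ∈ S, s * f = f * s}

/-- The double centraliser of a subset `S` in `G`. -/
def cent2 (G : Subgroup (Ω ≃o Ω)) (S : Set (Ω ≃o Ω)) : Set (Ω ≃o Ω) :=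
  cent G (cent G S)

/-- The pointwise stabiliser in `G` of a subset `S ⊆ Ω`. -/
def ptStab (G : Subgroup (Ω ≃o Ω)) (S : Set Ω) : Set (Ω ≃o Ω) :=
  {f | f ∈ G ∧ ∀ α ∈ S, f α = α}

/-- The congruence covered by `K`: the union of all convex `G`-congruences properly
contained in `K`. -/
def coveredRel (G : Subgroup (Ω ≃o Ω)) (K : Ω → Ω → Prop) : Ω → Ω → Prop :=
  fun γ δ => ∃ r : Ω → Ω → Prop, IsConvexCongruence G r ∧ relLe r K ∧ r ≠ K ∧ r γ δ

/-- `Γ ∈ π(Δ)`, where `K = κ(Δ)`: `Γ` is a class of the congruence covered by `K`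
contained in `Δ`. -/
def InPi (G : Subgroup (Ω ≃o Ω)) (K : Ω → Ω → Prop) (Δ Γ : Set Ω) : Prop :=
  ∃ δ ∈ Δ, Γ = {γ | coveredRel G K δ γ}

/-- An irreducible element of `G`. -/
def IsIrreducibleElt (G : Subgroup (Ω ≃o Ω)) (g : Ω ≃o Ω) : Prop :=
  autLe 1 g ∧ g ≠ 1 ∧
    ∀ g₁ g₂ : Ω ≃o Ω, g₁ ∈ G → g₂ ∈ G → autSup g₁ g₂ = g → autInf g₁ g₂ = 1 →
      g₁ = 1 ∨ g₂ = 1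

/-- `(G,Ω)` is controlled. -/
def Controlled (G : Subgroup (Ω ≃o Ω)) : Prop :=
  ∀ Δ : Set Ω, InT G Δ → ¬ MinimalInT G Δ → ∀ g ∈ rst G Δ,
    (∃ δ ∈ Δ ∩ supp g, Δ = {γ | Vcong G δ (g δ) δ γ}) ∨
      ∃ Δ' : Set Ω, InT G Δ' ∧ supp g ⊆ Δ' ∧ Δ' ⊂ Δ



/-! ### Auxiliary machinery for Statement 7 -/

section Statement7Aux

variable {Ω : Type*} [LinearOrder Ω]

private lemma autSup_apply' (f g : Ω ≃o Ω) (x : Ω) : autSup f g x = max (f x) (g x) := rfl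

private lemma autInf_apply' (f g : Ω ≃o Ω) (x : Ω) : autInf f g x = min (f x) (g x) := rfl

private lemma oi_inv_eq (f : Ω ≃o Ω) {u v : Ω} (h : f u = v) : f⁻¹ v = u := by
  rw [← h]; exact f.symm_apply_apply u

private lemma oi_apply_inv (f : Ω ≃o Ω) (v : Ω) : f (f⁻¹ v) = v :=
  f.apply_symm_apply v

private lemma lat1 (b c : Ω) : max (min b c) (min b (max b c)) = b := by
  rw [min_eq_left (le_max_left b c), max_eq_right (min_le_left b c)]

private lemma lat2 (c b : Ω) : max (min c b) (min b (max c b)) = b := by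
  rw [min_eq_left (le_max_right c b), max_eq_right (min_le_right c b)]

private lemma lat3 (b c : Ω) : max (min b b) (min c (max b b)) = b := by
  rw [min_self, max_self, max_eq_left (min_le_right c b)]

private lemma oTrans3 (G : Subgroup (Ω ≃o Ω)) (hlat : SublatticeClosed G)
    (ho2 : IsO2Transitive G) {a1 a2 a3 b1 b2 b3 : Ω}
    (ha12 : a1 < a2) (ha23 : a2 < a3) (hb12 : b1 < b2) (hb23 : b2 < b3) :
    ∃ w ∈ G, w a1 = b1 ∧ w a2 = b2 ∧ w a3 = b3 := by
  obtain ⟨u1, hu1, h11, h12⟩ := ho2 a1 a2 b1 b2 ha12 hb12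
  obtain ⟨u2, hu2, h21, h22⟩ := ho2 a2 a3 b2 b3 ha23 hb23
  obtain ⟨u3, hu3, h31, h32⟩ := ho2 a1 a3 b1 b3 (ha12.trans ha23) (hb12.trans hb23)
  refine ⟨autSup (autInf u1 u2) (autInf u3 (autSup u1 u2)), ?_, ?_, ?_, ?_⟩
  · exact (hlat _ _ (hlat u1 u2 hu1 hu2).2
      (hlat u3 (autSup u1 u2) hu3 (hlat u1 u2 hu1 hu2).1).2).1
  · simp only [autSup_apply', autInf_apply', h11, h31]; exact lat1 b1 (u2 a1)
  · simp only [autSup_apply', autInf_apply', h12, h21]; exact lat3 b2 (u3 a2)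
  · simp only [autSup_apply', autInf_apply', h22, h32]; exact lat2 (u1 a3) b3

private lemma oTrans4 (G : Subgroup (Ω ≃o Ω)) (hlat : SublatticeClosed G)
    (ho2 : IsO2Transitive G) {a1 a2 a3 a4 b1 b2 b3 b4 : Ω}
    (ha12 : a1 < a2) (ha23 : a2 < a3) (ha34 : a3 < a4)
    (hb12 : b1 < b2) (hb23 : b2 < b3) (hb34 : b3 < b4) :
    ∃ w ∈ G, w a1 = b1 ∧ w a2 = b2 ∧ w a3 = b3 ∧ w a4 = b4 := by
  obtain ⟨u1, hu1, h11, h12, h13⟩ := oTrans3 G hlat ho2 ha12 ha23 hb12 hb23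
  obtain ⟨u2, hu2, h21, h22, h23⟩ := oTrans3 G hlat ho2 ha23 ha34 hb23 hb34
  obtain ⟨u3, hu3, h31, h32⟩ :=
    ho2 a1 a4 b1 b4 (ha12.trans (ha23.trans ha34)) (hb12.trans (hb23.trans hb34))
  refine ⟨autSup (autInf u1 u2) (autInf u3 (autSup u1 u2)), ?_, ?_, ?_, ?_, ?_⟩
  · exact (hlat _ _ (hlat u1 u2 hu1 hu2).2
      (hlat u3 (autSup u1 u2) hu3 (hlat u1 u2 hu1 hu2).1).2).1
  · simp only [autSup_apply', autInf_apply', h11, h31]; exact lat1 b1 (u2 a1)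
  · simp only [autSup_apply', autInf_apply', h12, h21]; exact lat3 b2 (u3 a2)
  · simp only [autSup_apply', autInf_apply', h13, h22]; exact lat3 b3 (u3 a3)
  · simp only [autSup_apply', autInf_apply', h23, h32]; exact lat2 (u1 a4) b4

private lemma oTrans5 (G : Subgroup (Ω ≃o Ω)) (hlat : SublatticeClosed G)
    (ho2 : IsO2Transitive G) {a1 a2 a3 a4 a5 b1 b2 b3 b4 b5 : Ω}
    (ha12 : a1 < a2) (ha23 : a2 < a3) (ha34 : a3 < a4) (ha45 : a4 < a5)
    (hb12 : b1 < b2) (hb23 : b2 < b3) (hb34 : b3 < b4) (hb45 : b4 < b5) :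
    ∃ w ∈ G, w a1 = b1 ∧ w a2 = b2 ∧ w a3 = b3 ∧ w a4 = b4 ∧ w a5 = b5 := by
  obtain ⟨u1, hu1, h11, h12, h13, h14⟩ := oTrans4 G hlat ho2 ha12 ha23 ha34 hb12 hb23 hb34
  obtain ⟨u2, hu2, h21, h22, h23, h24⟩ := oTrans4 G hlat ho2 ha23 ha34 ha45 hb23 hb34 hb45
  obtain ⟨u3, hu3, h31, h32⟩ := ho2 a1 a5 b1 b5
    (ha12.trans (ha23.trans (ha34.trans ha45)))
    (hb12.trans (hb23.trans (hb34.trans hb45)))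
  refine ⟨autSup (autInf u1 u2) (autInf u3 (autSup u1 u2)), ?_, ?_, ?_, ?_, ?_, ?_⟩
  · exact (hlat _ _ (hlat u1 u2 hu1 hu2).2
      (hlat u3 (autSup u1 u2) hu3 (hlat u1 u2 hu1 hu2).1).2).1
  · simp only [autSup_apply', autInf_apply', h11, h31]; exact lat1 b1 (u2 a1)
  · simp only [autSup_apply', autInf_apply', h12, h21]; exact lat3 b2 (u3 a2)
  · simp only [autSup_apply', autInf_apply', h13, h22]; exact lat3 b3 (u3 a3)
  · simp only [autSup_apply', autInf_apply', h14, h23]; exact lat3 b4 (u3 a4)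
  · simp only [autSup_apply', autInf_apply', h24, h32]; exact lat2 (u1 a5) b5

/-- Density of the order, given any three distinct points. -/
private lemma dense_of (G : Subgroup (Ω ≃o Ω)) (ho2 : IsO2Transitive G)
    {c1 c2 c3 : Ω} (h12 : c1 < c2) (h23 : c2 < c3) {α β : Ω} (hab : α < β) :
    ∃ γ, α < γ ∧ γ < β := by
  obtain ⟨w, -, hw1, hw2⟩ := ho2 α β c1 c3 hab (h12.trans h23)
  refine ⟨w⁻¹ c2, ?_, ?_⟩
  · have : w α < w (w⁻¹ c2) := by rw [hw1, oi_apply_inv]; exact h12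
    exact w.lt_iff_lt.mp this
  · have : w (w⁻¹ c2) < w β := by rw [hw2, oi_apply_inv]; exact h23
    exact w.lt_iff_lt.mp this

/-- Separation, increasing case: the `b`-orbit interval lies below `a⁻²x`. -/
private lemma sep_pos (a b : Ω ≃o Ω) (hfix : ∀ z : Ω, a z = z ∨ b z = z)
    {x y : Ω} (hx : x < a x) (hy : y < b y) (hyx : y < x) :
    b y < a⁻¹ (a⁻¹ x) := by
  have hbu : b y < b (b y) := b.strictMono hy
  have hau : a (b y) = b y := (hfix (b y)).resolve_right (ne_of_gt hbu)
  by_contra hcon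
  push_neg at hcon
  rcases le_or_gt (b y) (a x) with h1 | h1
  · -- b y would be a fixed point inside the a-orbit interval: contradiction
    have e1 : x ≤ b y := by
      have s1 : a (a⁻¹ (a⁻¹ x)) ≤ a (b y) := a.monotone hcon
      rw [oi_apply_inv, hau] at s1
      have s2 : a (a⁻¹ x) ≤ a (b y) := a.monotone s1
      rw [oi_apply_inv, hau] at s2
      exact s2
    have e2 : b y ≤ x := by
      have s1 : a⁻¹ (b y) ≤ a⁻¹ (a x) := (a⁻¹ : Ω ≃o Ω).monotone h1
      rw [oi_inv_eq a hau, oi_inv_eq a rfl] at s1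
      exact s1
    have hex : b y = x := le_antisymm e2 e1
    have : a x = x := by rw [← hex, hau, hex]
    exact (ne_of_gt hx) this
  · -- a x < b y, and b fixes x, with y < x < b y : contradiction
    have hbx : b x = x := (hfix x).resolve_left (ne_of_gt hx)
    have h2 : b y < x := by
      have := b.strictMono hyx
      rw [hbx] at this
      exact this
    exact absurd (hx.trans h1) (not_lt.mpr h2.le)

/-- Separation, decreasing case. -/
private lemma sep_neg (a b : Ω ≃o Ω) (hfix : ∀ z : Ω, a z = z ∨ b z = z)
    {x y : Ω} (hx : a x < x) (hy : b y < y) (hxy : x < y) :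
    a⁻¹ (a⁻¹ x) < b y := by
  have hbu : b (b y) < b y := b.strictMono hy
  have hau : a (b y) = b y := (hfix (b y)).resolve_right (ne_of_lt hbu)
  by_contra hcon
  push_neg at hcon
  rcases le_or_gt (a x) (b y) with h1 | h1
  · have e1 : b y ≤ x := by
      have s1 : a (b y) ≤ a (a⁻¹ (a⁻¹ x)) := a.monotone hcon
      rw [oi_apply_inv, hau] at s1
      have s2 : a (b y) ≤ a (a⁻¹ x) := a.monotone s1
      rw [oi_apply_inv, hau] at s2
      exact s2
    have e2 : x ≤ b y := by
      have s1 : a⁻¹ (a x) ≤ a⁻¹ (b y) := (a⁻¹ : Ω ≃o Ω).monotone h1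
      rw [oi_inv_eq a hau, oi_inv_eq a rfl] at s1
      exact s1
    have hex : b y = x := le_antisymm e1 e2
    have : a x = x := by rw [← hex, hau, hex]
    exact (ne_of_lt hx) this
  · have hbx : b x = x := (hfix x).resolve_left (ne_of_lt hx)
    have h2 : x < b y := by
      have := b.strictMono hxy
      rw [hbx] at this
      exact this
    exact absurd (h1.trans hx) (not_lt.mpr h2.le)

/-- Core construction, increasing case. -/
private lemma core_pos (G : Subgroup (Ω ≃o Ω)) (hlat : SublatticeClosed G)
    (ho2 : IsO2Transitive G) (a b : Ω ≃o Ω)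
    (hfix : ∀ z : Ω, a z = z ∨ b z = z)
    {x y : Ω} (hx : x < a x) (hy : y < b y) (hsep : b y < a⁻¹ (a⁻¹ x)) :
    ∃ f ∈ G, ∃ k ∈ G,
      pcomm a⁻¹ (aconj a f) * pcomm b⁻¹ (aconj b k) ≠
        pcomm b⁻¹ (aconj b k) * pcomm a⁻¹ (aconj a f) := by
  -- basic orbit inequalities
  have hx1 : a⁻¹ x < x := by
    have := (a⁻¹ : Ω ≃o Ω).strictMono hx
    rwa [oi_inv_eq a rfl] at this
  have hx2 : a⁻¹ (a⁻¹ x) < a⁻¹ x := (a⁻¹ : Ω ≃o Ω).strictMono hx1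
  have hy1 : b⁻¹ y < y := by
    have := (b⁻¹ : Ω ≃o Ω).strictMono hy
    rwa [oi_inv_eq b rfl] at this
  have hy2 : b⁻¹ (b⁻¹ y) < b⁻¹ y := (b⁻¹ : Ω ≃o Ω).strictMono hy1
  have hy3 : b⁻¹ (b⁻¹ (b⁻¹ y)) < b⁻¹ (b⁻¹ y) := (b⁻¹ : Ω ≃o Ω).strictMono hy2
  -- fixed-point facts
  have hbx : b x = x := (hfix x).resolve_left (ne_of_gt hx)
  have haμ : a (a⁻¹ (a⁻¹ x)) = a⁻¹ x := oi_apply_inv a (a⁻¹ x)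
  have hbμ : b (a⁻¹ (a⁻¹ x)) = a⁻¹ (a⁻¹ x) := by
    refine (hfix (a⁻¹ (a⁻¹ x))).resolve_left ?_
    rw [haμ]
    exact ne_of_gt hx2
  have hbν : b (b⁻¹ (b⁻¹ y)) = b⁻¹ y := oi_apply_inv b (b⁻¹ y)
  have haν : a (b⁻¹ (b⁻¹ y)) = b⁻¹ (b⁻¹ y) := by
    refine (hfix (b⁻¹ (b⁻¹ y))).resolve_right ?_
    rw [hbν]
    exact ne_of_gt hy2
  -- density choices
  have htrip : a⁻¹ (a⁻¹ x) < a⁻¹ x ∧ a⁻¹ x < x := ⟨hx2, hx1⟩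
  obtain ⟨W, hW1, hW2⟩ := dense_of G ho2 hx2 hx1 hx
  obtain ⟨Wb, hWb1, hWb2⟩ := dense_of G ho2 hx2 hx1 hy
  obtain ⟨rb, hrb1, hrb2⟩ := dense_of G ho2 hx2 hx1 hy3
  -- derived inequalities for W' := a⁻¹ W, Wb' := b⁻¹ Wb
  have hW'1 : a⁻¹ x < a⁻¹ W := (a⁻¹ : Ω ≃o Ω).strictMono hW1
  have hW'2 : a⁻¹ W < x := by
    have := (a⁻¹ : Ω ≃o Ω).strictMono hW2
    rwa [oi_inv_eq a rfl] at this
  have hWb'1 : b⁻¹ y < b⁻¹ Wb := (b⁻¹ : Ω ≃o Ω).strictMono hWb1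
  have hWb'2 : b⁻¹ Wb < y := by
    have := (b⁻¹ : Ω ≃o Ω).strictMono hWb2
    rwa [oi_inv_eq b rfl] at this
  -- position of the b-cluster below the a-cluster
  have hνμ : b⁻¹ (b⁻¹ y) < a⁻¹ (a⁻¹ x) :=
    hy2.trans (hy1.trans (hy.trans hsep))
  have hyμ : y < a⁻¹ (a⁻¹ x) := hy.trans hsep
  -- the automorphism f
  obtain ⟨f, hfG, hf1, hf2, hf3, hf4⟩ :=
    oTrans4 G hlat ho2 (b1 := a⁻¹ W) (b2 := x) (b3 := W) (b4 := a x)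
      hνμ hx2 hx1 hW'2 hW1 hW2
  -- f : ν ↦ a⁻¹ W, μ ↦ x, a⁻¹x ↦ W, x ↦ a x
  -- the automorphism k
  obtain ⟨k, hkG, hk1, hk2, hk3, hk4, hk5⟩ :=
    oTrans5 G hlat ho2 (b1 := b⁻¹ Wb) (b2 := y) (b3 := Wb) (b4 := b y) (b5 := x)
      hrb2 hy2 hy1 hyμ hWb'2 hWb1 hWb2 (hsep.trans (hx2.trans hx1))
  -- k : rb ↦ b⁻¹ Wb, ν ↦ y, b⁻¹y ↦ Wb, y ↦ b y, μ ↦ x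
  refine ⟨f, hfG, k, hkG, ?_⟩
  intro hEq
  have hev : (pcomm a⁻¹ (aconj a f) * pcomm b⁻¹ (aconj b k)) (a⁻¹ (a⁻¹ x)) =
      (pcomm b⁻¹ (aconj b k) * pcomm a⁻¹ (aconj a f)) (a⁻¹ (a⁻¹ x)) := by
    rw [hEq]
  have hAμ : pcomm a⁻¹ (aconj a f) (a⁻¹ (a⁻¹ x)) = b⁻¹ (b⁻¹ y) := by
    show a (f⁻¹ (a⁻¹ (f (a⁻¹ (f⁻¹ (a (f (a⁻¹ (a⁻¹ x))))))))) = b⁻¹ (b⁻¹ y)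
    rw [hf2, oi_inv_eq f hf4, hf3, oi_inv_eq f hf1, haν]
  have hBμ : pcomm b⁻¹ (aconj b k) (a⁻¹ (a⁻¹ x)) = a⁻¹ (a⁻¹ x) := by
    show b (k⁻¹ (b⁻¹ (k (b⁻¹ (k⁻¹ (b (k (a⁻¹ (a⁻¹ x))))))))) = a⁻¹ (a⁻¹ x)
    rw [hk5, hbx, oi_inv_eq k hk5, oi_inv_eq b hbμ, hk5, oi_inv_eq b hbx,
      oi_inv_eq k hk5, hbμ]
  have hBν : pcomm b⁻¹ (aconj b k) (b⁻¹ (b⁻¹ y)) = b rb := by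
    show b (k⁻¹ (b⁻¹ (k (b⁻¹ (k⁻¹ (b (k (b⁻¹ (b⁻¹ y))))))))) = b rb
    rw [hk2, oi_inv_eq k hk4, hk3, oi_inv_eq k hk1]
  have hL : (pcomm a⁻¹ (aconj a f) * pcomm b⁻¹ (aconj b k)) (a⁻¹ (a⁻¹ x)) =
      b⁻¹ (b⁻¹ y) := by
    show pcomm a⁻¹ (aconj a f) (pcomm b⁻¹ (aconj b k) (a⁻¹ (a⁻¹ x))) = _
    rw [hBμ, hAμ]
  have hR : (pcomm b⁻¹ (aconj b k) * pcomm a⁻¹ (aconj a f)) (a⁻¹ (a⁻¹ x)) = b rb := by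
    show pcomm b⁻¹ (aconj b k) (pcomm a⁻¹ (aconj a f) (a⁻¹ (a⁻¹ x))) = _
    rw [hAμ, hBν]
  rw [hL, hR] at hev
  -- but b rb > b⁻¹ (b⁻¹ y)
  have : b (b⁻¹ (b⁻¹ (b⁻¹ y))) < b rb := b.strictMono hrb1
  rw [oi_apply_inv] at this
  exact absurd hev (ne_of_lt this)

/-- Core construction, decreasing case. -/
private lemma core_neg (G : Subgroup (Ω ≃o Ω)) (hlat : SublatticeClosed G)
    (ho2 : IsO2Transitive G) (a b : Ω ≃o Ω)
    (hfix : ∀ z : Ω, a z = z ∨ b z = z)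
    {x y : Ω} (hx : a x < x) (hy : b y < y) (hsep : a⁻¹ (a⁻¹ x) < b y) :
    ∃ f ∈ G, ∃ k ∈ G,
      pcomm a⁻¹ (aconj a f) * pcomm b⁻¹ (aconj b k) ≠
        pcomm b⁻¹ (aconj b k) * pcomm a⁻¹ (aconj a f) := by
  have hx1 : x < a⁻¹ x := by
    have := (a⁻¹ : Ω ≃o Ω).strictMono hx
    rwa [oi_inv_eq a rfl] at this
  have hx2 : a⁻¹ x < a⁻¹ (a⁻¹ x) := (a⁻¹ : Ω ≃o Ω).strictMono hx1
  have hy1 : y < b⁻¹ y := by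
    have := (b⁻¹ : Ω ≃o Ω).strictMono hy
    rwa [oi_inv_eq b rfl] at this
  have hy2 : b⁻¹ y < b⁻¹ (b⁻¹ y) := (b⁻¹ : Ω ≃o Ω).strictMono hy1
  have hy3 : b⁻¹ (b⁻¹ y) < b⁻¹ (b⁻¹ (b⁻¹ y)) := (b⁻¹ : Ω ≃o Ω).strictMono hy2
  have hbx : b x = x := (hfix x).resolve_left (ne_of_lt hx)
  have haμ : a (a⁻¹ (a⁻¹ x)) = a⁻¹ x := oi_apply_inv a (a⁻¹ x)
  have hbμ : b (a⁻¹ (a⁻¹ x)) = a⁻¹ (a⁻¹ x) := by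
    refine (hfix (a⁻¹ (a⁻¹ x))).resolve_left ?_
    rw [haμ]
    exact ne_of_lt hx2
  have hbν : b (b⁻¹ (b⁻¹ y)) = b⁻¹ y := oi_apply_inv b (b⁻¹ y)
  have haν : a (b⁻¹ (b⁻¹ y)) = b⁻¹ (b⁻¹ y) := by
    refine (hfix (b⁻¹ (b⁻¹ y))).resolve_right ?_
    rw [hbν]
    exact ne_of_lt hy2
  obtain ⟨W, hW1, hW2⟩ := dense_of G ho2 hx1 hx2 hx
  obtain ⟨Wb, hWb1, hWb2⟩ := dense_of G ho2 hx1 hx2 hy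
  obtain ⟨rb, hrb1, hrb2⟩ := dense_of G ho2 hx1 hx2 hy3
  have hW'1 : a⁻¹ W < a⁻¹ x := (a⁻¹ : Ω ≃o Ω).strictMono hW2
  have hW'2 : x < a⁻¹ W := by
    have := (a⁻¹ : Ω ≃o Ω).strictMono hW1
    rwa [oi_inv_eq a rfl] at this
  have hWb'1 : b⁻¹ Wb < b⁻¹ y := (b⁻¹ : Ω ≃o Ω).strictMono hWb2
  have hWb'2 : y < b⁻¹ Wb := by
    have := (b⁻¹ : Ω ≃o Ω).strictMono hWb1
    rwa [oi_inv_eq b rfl] at this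
  have hνμ : a⁻¹ (a⁻¹ x) < b⁻¹ (b⁻¹ y) :=
    hsep.trans (hy.trans (hy1.trans hy2))
  have hyμ : a⁻¹ (a⁻¹ x) < y := hsep.trans hy
  -- f : x ↦ a x, a⁻¹x ↦ W, μ ↦ x, ν ↦ a⁻¹ W  (sources increasing)
  obtain ⟨f, hfG, hf4, hf3, hf2, hf1⟩ :=
    oTrans4 G hlat ho2 (b1 := a x) (b2 := W) (b3 := x) (b4 := a⁻¹ W)
      hx1 hx2 hνμ hW1 hW2 hW'2
  -- k : μ ↦ x, y ↦ b y, b⁻¹y ↦ Wb, ν ↦ y, rb ↦ b⁻¹ Wb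
  obtain ⟨k, hkG, hk5, hk4, hk3, hk2, hk1⟩ :=
    oTrans5 G hlat ho2 (b1 := x) (b2 := b y) (b3 := Wb) (b4 := y) (b5 := b⁻¹ Wb)
      hyμ hy1 hy2 hrb1 ((hx1.trans hx2).trans hsep) hWb1 hWb2 hWb'2
  refine ⟨f, hfG, k, hkG, ?_⟩
  intro hEq
  have hev : (pcomm a⁻¹ (aconj a f) * pcomm b⁻¹ (aconj b k)) (a⁻¹ (a⁻¹ x)) =
      (pcomm b⁻¹ (aconj b k) * pcomm a⁻¹ (aconj a f)) (a⁻¹ (a⁻¹ x)) := by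
    rw [hEq]
  have hAμ : pcomm a⁻¹ (aconj a f) (a⁻¹ (a⁻¹ x)) = b⁻¹ (b⁻¹ y) := by
    show a (f⁻¹ (a⁻¹ (f (a⁻¹ (f⁻¹ (a (f (a⁻¹ (a⁻¹ x))))))))) = b⁻¹ (b⁻¹ y)
    rw [hf2, oi_inv_eq f hf4, hf3, oi_inv_eq f hf1, haν]
  have hBμ : pcomm b⁻¹ (aconj b k) (a⁻¹ (a⁻¹ x)) = a⁻¹ (a⁻¹ x) := by
    show b (k⁻¹ (b⁻¹ (k (b⁻¹ (k⁻¹ (b (k (a⁻¹ (a⁻¹ x))))))))) = a⁻¹ (a⁻¹ x)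
    rw [hk5, hbx, oi_inv_eq k hk5, oi_inv_eq b hbμ, hk5, oi_inv_eq b hbx,
      oi_inv_eq k hk5, hbμ]
  have hBν : pcomm b⁻¹ (aconj b k) (b⁻¹ (b⁻¹ y)) = b rb := by
    show b (k⁻¹ (b⁻¹ (k (b⁻¹ (k⁻¹ (b (k (b⁻¹ (b⁻¹ y))))))))) = b rb
    rw [hk2, oi_inv_eq k hk4, hk3, oi_inv_eq k hk1]
  have hL : (pcomm a⁻¹ (aconj a f) * pcomm b⁻¹ (aconj b k)) (a⁻¹ (a⁻¹ x)) =
      b⁻¹ (b⁻¹ y) := by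
    show pcomm a⁻¹ (aconj a f) (pcomm b⁻¹ (aconj b k) (a⁻¹ (a⁻¹ x))) = _
    rw [hBμ, hAμ]
  have hR : (pcomm b⁻¹ (aconj b k) * pcomm a⁻¹ (aconj a f)) (a⁻¹ (a⁻¹ x)) = b rb := by
    show pcomm b⁻¹ (aconj b k) (pcomm a⁻¹ (aconj a f) (a⁻¹ (a⁻¹ x))) = _
    rw [hAμ, hBν]
  rw [hL, hR] at hev
  have : b rb < b (b⁻¹ (b⁻¹ (b⁻¹ y))) := b.strictMono hrb2
  rw [oi_apply_inv] at this
  exact absurd hev (ne_of_gt this)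

end Statement7Aux

/-- In an o-2 transitive ℓ-permutation group, if `supp h` and
`supp h^g` are disjoint (`h ≠ 1`), then suitable commutators fail to commute. -/
theorem noncommuting_commutators {Ω : Type*} [LinearOrder Ω]
    (G : Subgroup (Ω ≃o Ω)) (hlat : SublatticeClosed G) (ho2 : IsO2Transitive G)
    (g h : Ω ≃o Ω) (hg : g ∈ G) (hh : h ∈ G) (hne : h ≠ 1)
    (hdisj : supp h ∩ supp (aconj h g) = ∅) :
    ∃ f ∈ G, ∃ k ∈ G,
      pcomm h⁻¹ (aconj h f) * pcomm (aconj h g)⁻¹ (aconj (aconj h g) k) ≠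
        pcomm (aconj h g)⁻¹ (aconj (aconj h g) k) * pcomm h⁻¹ (aconj h f) := by
  set b : Ω ≃o Ω := aconj h g with hbdef
  have hbG : b ∈ G := by
    rw [hbdef, aconj]
    exact mul_mem (mul_mem (inv_mem hg) hh) hg
  have hfix : ∀ z : Ω, h z = z ∨ b z = z := by
    intro z
    by_contra hc
    push_neg at hc
    have hz : z ∈ supp h ∩ supp (aconj h g) := ⟨hc.1, by rw [← hbdef]; exact hc.2⟩
    rw [hdisj] at hz
    exact hz
  have hfix' : ∀ z : Ω, b z = z ∨ h z = z := fun z => (hfix z).symm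
  obtain ⟨x, hx0⟩ : ∃ x : Ω, h x ≠ x := by
    by_contra hc
    push_neg at hc
    exact hne (OrderIso.ext (funext fun z => hc z))
  have hgy : g (g⁻¹ x) = x := oi_apply_inv g x
  have hby : b (g⁻¹ x) = g⁻¹ (h x) := by
    show g⁻¹ (h (g (g⁻¹ x))) = g⁻¹ (h x)
    rw [hgy]
  have hyne : b (g⁻¹ x) ≠ g⁻¹ x := by
    rw [hby]
    intro e
    exact hx0 (g.symm.injective e)
  have hxyne : g⁻¹ x ≠ x := by
    intro e
    rcases hfix x with h1 | h1
    · exact hx0 h1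
    · rw [e] at hyne
      exact hyne h1
  rcases hx0.lt_or_gt with hd | hd
  · -- decreasing case : h x < x
    have hyd : b (g⁻¹ x) < g⁻¹ x := by
      rw [hby]
      exact (g⁻¹ : Ω ≃o Ω).strictMono hd
    rcases hxyne.lt_or_gt with hyx | hxy
    · -- g⁻¹ x < x : b-cluster below, use roles swapped with core_neg
      have hsep := sep_neg b h hfix' hyd hd hyx
      obtain ⟨f, hfG, k, hkG, hne2⟩ := core_neg G hlat ho2 b h hfix' hyd hd hsep
      exact ⟨k, hkG, f, hfG, hne2.symm⟩
    · -- x < g⁻¹ x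
      have hsep := sep_neg h b hfix hd hyd hxy
      obtain ⟨f, hfG, k, hkG, hne2⟩ := core_neg G hlat ho2 h b hfix hd hyd hsep
      exact ⟨f, hfG, k, hkG, hne2⟩
  · -- increasing case : x < h x
    have hyd : g⁻¹ x < b (g⁻¹ x) := by
      rw [hby]
      exact (g⁻¹ : Ω ≃o Ω).strictMono hd
    rcases hxyne.lt_or_gt with hyx | hxy
    · -- g⁻¹ x < x
      have hsep := sep_pos h b hfix hd hyd hyx
      obtain ⟨f, hfG, k, hkG, hne2⟩ := core_pos G hlat ho2 h b hfix hd hyd hsep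
      exact ⟨f, hfG, k, hkG, hne2⟩
    · -- x < g⁻¹ x : roles swapped
      have hsep := sep_pos b h hfix' hyd hd hxy
      obtain ⟨f, hfG, k, hkG, hne2⟩ := core_pos G hlat ho2 b h hfix' hyd hd hsep
      exact ⟨k, hkG, f, hfG, hne2.symm⟩

end LPerm
end

section
/- Let (G,Ω) be an ample transitive ℓ-permutation group whose spine 𝔎 has no minimal element, let Δ ∈ T and h ∈ Q_Δ. (a) Let Δ' ∈ T with Δ' ⊊ Δ and Δ'h ≠ Δ', and let g ∈ rst(Δ') with g ≠ 1. Then: (i) [h⁻¹,h^g] ≠ 1; (ii) if f ∈ G and [[h⁻¹,h^g],f] = 1, then Δ'f = Δ'. (b) If β ∈ supp(h) and f ∈ G, then either βf = β or [[h⁻¹,h^g],f] ≠ 1 for some g ∈ rst(Δ). -/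
/-!  Common framework for ℓ-permutation groups on a totally ordered set. -/

namespace LPerm

variable {Ω : Type*} [LinearOrder Ω]

section Aux

variable {G : Subgroup (Ω ≃o Ω)} {r s : Ω → Ω → Prop}

lemma vcong_self (G : Subgroup (Ω ≃o Ω)) (α β : Ω) : Vcong G α β α β :=
  fun _ _ hab => hab

lemma vcong_icc (G : Subgroup (Ω ≃o Ω)) (α β : Ω) : IsConvexCongruence G (Vcong G α β) := by
  refine ⟨⟨fun x t ht hab => ht.1.refl x,
           fun hxy t ht hab => ht.1.symm (hxy t ht hab),
           fun hxy hyz t ht hab => ht.1.trans (hxy t ht hab) (hyz t ht hab)⟩,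
         fun x y z hxz hxy hyz t ht hab => ht.2.1 x y z (hxz t ht hab) hxy hyz,
         fun g hg x y hxy t ht hab => ht.2.2 g hg x y (hxy t ht hab)⟩

lemma vcong_min (hr : IsConvexCongruence G r) {α β : Ω} (hab : r α β) :
    relLe (Vcong G α β) r := fun _ _ hv => hv r hr hab

lemma eq_icc (G : Subgroup (Ω ≃o Ω)) : IsConvexCongruence G (fun a b : Ω => a = b) :=
  ⟨⟨fun _ => rfl, fun h => h.symm, fun h h' => h.trans h'⟩,
   fun _ _ _ hac hab hbc => le_antisymm hab (hac ▸ hbc),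
   fun g _ _ _ h => by rw [h]⟩

lemma relLe_antisymm (h1 : relLe r s) (h2 : relLe s r) : r = s := by
  funext x y; exact propext ⟨h1 x y, h2 x y⟩

/-- classes are equal when related -/
lemma class_eq (hr : IsConvexCongruence G r) {δ γ : Ω} (h : r δ γ) :
    {x | r δ x} = {x | r γ x} := by
  ext x
  exact ⟨fun hx => hr.1.trans (hr.1.symm h) hx, fun hx => hr.1.trans h hx⟩

lemma image_class (hr : IsConvexCongruence G r) {g : Ω ≃o Ω} (hg : g ∈ G) (δ : Ω) :
    g '' {x | r δ x} = {x | r (g δ) x} := by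
  ext x
  constructor
  · rintro ⟨y, hy, rfl⟩
    exact hr.2.2 g hg δ y hy
  · intro hx
    refine ⟨g⁻¹ x, ?_, g.apply_symm_apply x⟩
    have := hr.2.2 g⁻¹ (inv_mem hg) (g δ) x hx
    simpa using this

/-- convexity of a class, both directions -/
lemma class_convex (hr : IsConvexCongruence G r) {δ x y z : Ω}
    (hx : r δ x) (hy : r δ y) (h1 : x ≤ z) (h2 : z ≤ y) : r δ z := by
  have hxy : r x y := hr.1.trans (hr.1.symm hx) hy
  have := hr.2.1 x z y hxy h1 h2
  exact hr.1.trans hx this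

lemma class_lt_or (hr : IsConvexCongruence G r) {δ ε : Ω} (hdis : ¬ r δ ε) :
    (∀ x y, r δ x → r ε y → x < y) ∨ (∀ x y, r δ x → r ε y → y < x) := by
  have key : ∀ δ' ε' : Ω, ¬ r δ' ε' → δ' < ε' → ∀ x y, r δ' x → r ε' y → x < y := by
    intro δ' ε' hd hlt x y hx hy
    by_contra hc
    push_neg at hc
    rcases le_or_gt δ' y with h1 | h1
    · have hy' : r δ' y := class_convex hr (hr.1.refl δ') hx h1 hc
      exact hd (hr.1.trans hy' (hr.1.symm hy))
    · -- y < δ' ≤ ε' : y, ε' in ε'-class, δ' between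
      have : r ε' δ' := class_convex hr hy (hr.1.refl ε') h1.le hlt.le
      exact hd (hr.1.symm this)
  rcases lt_trichotomy δ ε with h | h | h
  · exact Or.inl (key δ ε hdis h)
  · exact absurd (h ▸ hr.1.refl δ) hdis
  · exact Or.inr (fun x y hx hy => key ε δ (fun hh => hdis (hr.1.symm hh)) h y x hy hx)

end Aux

section Chain
set_option linter.unusedSectionVars false

variable {G : Subgroup (Ω ≃o Ω)} {r s : Ω → Ω → Prop}

lemma icc_aux (hr : IsConvexCongruence G r) (hs : IsConvexCongruence G s)
    (htrans : IsTransitive G) {α b d : Ω}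
    (hrb : r α b) (hsb : ¬ s α b) (hsd : s α d) (hrd : ¬ r α d)
    (h1 : d < α) (h2 : α < b) : False := by
  obtain ⟨g, hg, hga⟩ := htrans α b
  have hsbd : s b (g d) := by
    have := hs.2.2 g hg α d hsd
    rwa [hga] at this
  have hlt1 : g d < b := by
    have := g.strictMono h1
    rwa [hga] at this
  have hαgd : α < g d := by
    by_contra hc
    push_neg at hc
    have : s b α := class_convex hs hsbd (hs.1.refl b) hc h2.le
    exact hsb (hs.1.symm this)
  -- convexity of r-class of α gives r α (g d)
  have hrgd : r α (g d) := class_convex hr (hr.1.refl α) hrb hαgd.le hlt1.le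
  -- pull back by g
  have h3 : r (g⁻¹ α) d := by
    have := hr.2.2 g⁻¹ (inv_mem hg) α (g d) hrgd
    simpa using this
  have h4 : r α (g⁻¹ α) := by
    have hab : r α (g α) := hga ▸ hrb
    have := hr.2.2 g⁻¹ (inv_mem hg) α (g α) hab
    rw [show g⁻¹ (g α) = α from g.symm_apply_apply α] at this
    exact hr.1.symm (by simpa using this)
  exact hrd (hr.1.trans h4 h3)

lemma icc_comparable (htrans : IsTransitive G)
    (hr : IsConvexCongruence G r) (hs : IsConvexCongruence G s) :
    relLe r s ∨ relLe s r := by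
  by_contra hc
  push_neg at hc
  obtain ⟨h1, h2⟩ := hc
  simp only [relLe, not_forall] at h1 h2
  obtain ⟨a, b, hab, hnab⟩ := h1
  obtain ⟨c, d, hcd, hncd⟩ := h2
  obtain ⟨g, hg, hgc⟩ := htrans c a
  set d' := g d with hd'
  have hsad : s a d' := hgc ▸ hs.2.2 g hg c d hcd
  have hrad : ¬ r a d' := by
    intro hh
    apply hncd
    have := hr.2.2 g⁻¹ (inv_mem hg) a d' hh
    rw [← hgc] at this
    simpa [hd'] using this
  have hba : b ≠ a := fun h => hnab (h ▸ hs.1.refl a)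
  have hda : d' ≠ a := fun h => hrad (h ▸ hr.1.refl a)
  rcases lt_or_gt_of_ne hba with hb | hb <;> rcases lt_or_gt_of_ne hda with hd | hd
  · -- b < a, d' < a : same side below
    rcases le_total b d' with h | h
    · exact hrad (class_convex hr hab (hr.1.refl a) h hd.le)
    · exact hnab (class_convex hs hsad (hs.1.refl a) h hb.le)
  · -- b < a < d'
    exact icc_aux hs hr htrans hsad hrad hab hnab hb hd
  · -- d' < a < b
    exact icc_aux hr hs htrans hab hnab hsad hrad hd hb
  · -- a < b, a < d'
    rcases le_total b d' with h | h
    · exact hnab (class_convex hs (hs.1.refl a) hsad hb.le h)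
    · exact hrad (class_convex hr (hr.1.refl a) hab hd.le h)

end Chain

section Core
set_option linter.unusedSectionVars false

variable {G : Subgroup (Ω ≃o Ω)} {r : Ω → Ω → Prop}

lemma pcomm_eq_one_iff (a b : Ω ≃o Ω) : pcomm a b = 1 ↔ a * b = b * a := by
  constructor
  · intro H
    have H' : a⁻¹ * b⁻¹ * a * b = 1 := H
    have h2 := congrArg (fun z : Ω ≃o Ω => b * a * z) H'
    simp only [mul_one] at h2
    calc a * b = b * a * (a⁻¹ * b⁻¹ * a * b) := by group
    _ = b * a := h2
  · intro H
    show a⁻¹ * b⁻¹ * a * b = 1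
    calc a⁻¹ * b⁻¹ * a * b = a⁻¹ * b⁻¹ * (a * b) := by group
    _ = a⁻¹ * b⁻¹ * (b * a) := by rw [H]
    _ = 1 := by group

lemma exists_moved {g : Ω ≃o Ω} (hg : g ≠ 1) : ∃ x, g x ≠ x := by
  by_contra hc
  push_neg at hc
  exact hg (DFunLike.ext g 1 hc)

lemma g2_ne {g : Ω ≃o Ω} {x : Ω} (h : g x ≠ x) : g (g x) ≠ x := by
  rcases lt_or_gt_of_ne h with h1 | h1
  · exact ne_of_lt (lt_trans (by simpa using g.strictMono h1) h1)
  · exact ne_of_gt (lt_trans h1 (by simpa using g.strictMono h1))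

lemma core (hr : IsConvexCongruence G r) (β₀ : Ω) {Δ' : Set Ω}
    (hΔ' : Δ' = {γ | r β₀ γ})
    {h g : Ω ≃o Ω} (hhG : h ∈ G) (hgG : g ∈ G)
    (hsg : supp g ⊆ Δ') (hgne : g ≠ 1) (hAne : h '' Δ' ≠ Δ') :
    pcomm h⁻¹ (aconj h g) ≠ 1 ∧
    ∀ f : Ω ≃o Ω, f ∈ G → pcomm (pcomm h⁻¹ (aconj h g)) f = 1 → f '' Δ' = Δ' := by
  set c := pcomm h⁻¹ (aconj h g) with hc
  have hinv1 : ∀ x, h⁻¹ (h x) = x := fun x => h.symm_apply_apply x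
  have hinv2 : ∀ x, h (h⁻¹ x) = x := fun x => h.apply_symm_apply x
  have c_apply : ∀ x : Ω, c x = h (g⁻¹ (h⁻¹ (g (h⁻¹ (g⁻¹ (h (g x))))))) := fun _ => rfl
  set A : Set Ω := h '' Δ' with hAdef
  set B : Set Ω := (h⁻¹ : Ω ≃o Ω) '' Δ' with hBdef
  -- the three classes
  have hAcls : A = {x | r (h β₀) x} := by rw [hAdef, hΔ']; exact image_class hr hhG β₀
  have hBcls : B = {x | r (h⁻¹ β₀) x} := by rw [hBdef, hΔ']; exact image_class hr (inv_mem hhG) β₀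
  have hBne : B ≠ Δ' := by
    intro hB
    apply hAne
    have himg : h '' B = Δ' := by
      rw [hBdef, Set.image_image]
      simp [hinv2]
    rw [hB] at himg
    exact himg
  -- disjointness helpers
  have memD : ∀ x, x ∈ Δ' ↔ r β₀ x := fun x => by rw [hΔ']; rfl
  have hA : ∀ x ∈ Δ', h x ∉ Δ' := by
    intro x hx hmem
    apply hAne
    rw [hAcls, hΔ']
    have h1 : r (h β₀) (h x) := hr.2.2 h hhG β₀ x ((memD x).1 hx)
    exact class_eq hr (hr.1.trans h1 (hr.1.symm ((memD _).1 hmem)))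
  have hB : ∀ x ∈ Δ', h⁻¹ x ∉ Δ' := by
    intro x hx hmem
    apply hBne
    rw [hBcls, hΔ']
    have h1 : r (h⁻¹ β₀) (h⁻¹ x) := hr.2.2 h⁻¹ (inv_mem hhG) β₀ x ((memD x).1 hx)
    exact class_eq hr (hr.1.trans h1 (hr.1.symm ((memD _).1 hmem)))
  -- g fixes outside, preserves Δ'
  have hgfix : ∀ x, x ∉ Δ' → g x = x := by
    intro x hx; by_contra hne; exact hx (hsg hne)
  have hgfix' : ∀ x, x ∉ Δ' → g⁻¹ x = x := by
    intro x hx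
    have h1 : g (g⁻¹ x) = x := g.apply_symm_apply x
    have h2 : g x = x := hgfix x hx
    exact g.injective (h1.trans h2.symm)
  have hgmem : ∀ x ∈ Δ', g x ∈ Δ' := by
    intro x hx
    by_cases he : g x = x
    · rwa [he]
    · exact hsg (show g (g x) ≠ g x from fun hh => he (g.injective hh))
  -- computation on Δ'
  have c_on : ∀ x ∈ Δ', c x = g (g x) := by
    intro x hx
    rw [c_apply]
    have t1 : g x ∈ Δ' := hgmem x hx
    have t2 : h (g x) ∉ Δ' := hA _ t1
    rw [hgfix' _ t2, hinv1]
    have t5 : g (g x) ∈ Δ' := hgmem _ t1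
    have t6 : h⁻¹ (g (g x)) ∉ Δ' := hB _ t5
    rw [hgfix' _ t6, hinv2]
  -- computation off the three classes
  have c_off : ∀ x, x ∉ Δ' → x ∉ A → x ∉ B → c x = x := by
    intro x hx hxA hxB
    have hhx : h x ∉ Δ' := by
      intro hmem
      exact hxB ⟨h x, hmem, hinv1 x⟩
    have hhx' : h⁻¹ x ∉ Δ' := by
      intro hmem
      exact hxA ⟨h⁻¹ x, hmem, hinv2 x⟩
    rw [c_apply, hgfix _ hx, hgfix' _ hhx, hinv1, hgfix _ hx, hgfix' _ hhx', hinv2]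
  have hsuppc : ∀ x, c x ≠ x → x ∈ Δ' ∨ x ∈ A ∨ x ∈ B := by
    intro x hcx
    by_contra hcon
    push_neg at hcon
    exact hcx (c_off x hcon.1 hcon.2.1 hcon.2.2)
  obtain ⟨β₁, hβ₁⟩ := exists_moved hgne
  have hβ₁Δ : β₁ ∈ Δ' := hsg hβ₁
  have hcβ₁ : c β₁ ≠ β₁ := by rw [c_on β₁ hβ₁Δ]; exact g2_ne hβ₁
  constructor
  · intro hone
    rw [hone] at hcβ₁
    exact hcβ₁ rfl
  · intro f hfG hpf
    have hcomm : c * f = f * c := (pcomm_eq_one_iff c f).1 hpf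
    have hcommapp : ∀ x, c (f x) = f (c x) := by
      intro x
      have := congrArg (fun z : Ω ≃o Ω => z x) hcomm
      simpa using this
    -- main auxiliary: a commuting f' with Δ' strictly below f'''Δ' is impossible
    have aux : ∀ f' : Ω ≃o Ω, f' ∈ G → (∀ x, c (f' x) = f' (c x)) →
        (∀ x ∈ Δ', ∀ y ∈ f' '' Δ', x < y) → False := by
      intro f hfG hcomm hlt01
      set E1 : Set Ω := f '' Δ' with hE1
      set E2 : Set Ω := f '' E1 with hE2
      set E3 : Set Ω := f '' E2 with hE3
      have hE1c : E1 = {x | r (f β₀) x} := by rw [hE1, hΔ']; exact image_class hr hfG β₀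
      have hE2c : E2 = {x | r (f (f β₀)) x} := by rw [hE2, hE1c]; exact image_class hr hfG _
      have hE3c : E3 = {x | r (f (f (f β₀))) x} := by rw [hE3, hE2c]; exact image_class hr hfG _
      have hlt12 : ∀ x ∈ E1, ∀ y ∈ E2, x < y := by
        rintro x ⟨u, hu, rfl⟩ y ⟨v, hv, rfl⟩
        exact f.strictMono (hlt01 u hu v hv)
      have hlt23 : ∀ x ∈ E2, ∀ y ∈ E3, x < y := by
        rintro x ⟨u, hu, rfl⟩ y ⟨v, hv, rfl⟩
        exact f.strictMono (hlt12 u hu v hv)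
      have hfβ₀1 : f β₀ ∈ E1 := ⟨β₀, (memD β₀).2 (hr.1.refl β₀), rfl⟩
      have hffβ₀2 : f (f β₀) ∈ E2 := ⟨f β₀, hfβ₀1, rfl⟩
      have hlt02 : ∀ x ∈ Δ', ∀ y ∈ E2, x < y := fun x hx y hy =>
        lt_trans (hlt01 x hx _ hfβ₀1) (hlt12 _ hfβ₀1 y hy)
      have hlt03 : ∀ x ∈ Δ', ∀ y ∈ E3, x < y := fun x hx y hy =>
        lt_trans (hlt02 x hx _ hffβ₀2) (hlt23 _ hffβ₀2 y hy)
      have hlt13 : ∀ x ∈ E1, ∀ y ∈ E3, x < y := fun x hx y hy =>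
        lt_trans (hlt12 x hx _ hffβ₀2) (hlt23 _ hffβ₀2 y hy)
      -- points of supp c in each Ei
      have hm1 : c (f β₁) ≠ f β₁ := by rw [hcomm]; exact fun hh => hcβ₁ (f.injective hh)
      have hm2 : c (f (f β₁)) ≠ f (f β₁) := by rw [hcomm]; exact fun hh => hm1 (f.injective hh)
      have hm3 : c (f (f (f β₁))) ≠ f (f (f β₁)) := by
        rw [hcomm]; exact fun hh => hm2 (f.injective hh)
      have hin1 : f β₁ ∈ E1 := ⟨β₁, hβ₁Δ, rfl⟩
      have hin2 : f (f β₁) ∈ E2 := ⟨f β₁, hin1, rfl⟩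
      have hin3 : f (f (f β₁)) ∈ E3 := ⟨f (f β₁), hin2, rfl⟩
      -- identification with A or B
      have classId : ∀ (δ : Ω) (x : Ω), x ∈ {y | r δ y} → x ∈ A ∨ x ∈ B →
          {y | r δ y} = A ∨ {y | r δ y} = B := by
        intro δ x hx hor
        rcases hor with hA' | hB'
        · left
          rw [hAcls] at hA' ⊢
          exact class_eq hr (hr.1.trans hx (hr.1.symm hA'))
        · right
          rw [hBcls] at hB' ⊢
          exact class_eq hr (hr.1.trans hx (hr.1.symm hB'))
      have hnd1 : f β₁ ∉ Δ' := fun hmem => lt_irrefl _ (hlt01 _ hmem _ hin1)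
      have hnd2 : f (f β₁) ∉ Δ' := fun hmem => lt_irrefl _ (hlt02 _ hmem _ hin2)
      have hnd3 : f (f (f β₁)) ∉ Δ' := fun hmem => lt_irrefl _ (hlt03 _ hmem _ hin3)
      have hid1 : E1 = A ∨ E1 = B := by
        rw [hE1c]
        refine classId _ (f β₁) (hE1c ▸ hin1) ?_
        rcases hsuppc _ hm1 with hh | hh | hh
        · exact absurd hh hnd1
        · exact Or.inl hh
        · exact Or.inr hh
      have hid2 : E2 = A ∨ E2 = B := by
        rw [hE2c]
        refine classId _ (f (f β₁)) (hE2c ▸ hin2) ?_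
        rcases hsuppc _ hm2 with hh | hh | hh
        · exact absurd hh hnd2
        · exact Or.inl hh
        · exact Or.inr hh
      have hid3 : E3 = A ∨ E3 = B := by
        rw [hE3c]
        refine classId _ (f (f (f β₁))) (hE3c ▸ hin3) ?_
        rcases hsuppc _ hm3 with hh | hh | hh
        · exact absurd hh hnd3
        · exact Or.inl hh
        · exact Or.inr hh
      have hne12 : E1 ≠ E2 := by
        intro hh
        exact lt_irrefl _ (hlt12 _ (hh ▸ hin2) _ hin2)
      have hne13 : E1 ≠ E3 := by
        intro hh
        exact lt_irrefl _ (hlt13 _ (hh ▸ hin3) _ hin3)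
      have hne23 : E2 ≠ E3 := by
        intro hh
        exact lt_irrefl _ (hlt23 _ (hh ▸ hin3) _ hin3)
      rcases hid1 with h1 | h1 <;> rcases hid2 with h2 | h2 <;> rcases hid3 with h3 | h3
      · exact hne12 (h1.trans h2.symm)
      · exact hne12 (h1.trans h2.symm)
      · exact hne13 (h1.trans h3.symm)
      · exact hne23 (h2.trans h3.symm)
      · exact hne23 (h2.trans h3.symm)
      · exact hne13 (h1.trans h3.symm)
      · exact hne12 (h1.trans h2.symm)
      · exact hne12 (h1.trans h2.symm)
    -- now conclude f '' Δ' = Δ'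
    by_contra hfne
    have hfcls : f '' Δ' = {x | r (f β₀) x} := by rw [hΔ']; exact image_class hr hfG β₀
    have hdis : ¬ r β₀ (f β₀) := by
      intro hh
      apply hfne
      rw [hfcls, hΔ']
      exact (class_eq hr hh).symm
    rcases class_lt_or hr hdis with hlt | hlt
    · refine aux f hfG hcommapp ?_
      intro x hx y hy
      rw [hfcls] at hy
      exact hlt x y ((memD x).1 hx) hy
    · -- f '' Δ' is below Δ'; use f⁻¹
      have hcomm' : ∀ x, c (f⁻¹ x) = f⁻¹ (c x) := by
        intro x
        have h2 : c * f⁻¹ = f⁻¹ * c := by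
          have hcc : Commute c f := hcomm
          exact hcc.inv_right
        have := congrArg (fun z : Ω ≃o Ω => z x) h2
        simpa using this
      refine aux f⁻¹ (inv_mem hfG) hcomm' ?_
      intro x hx y hy
      obtain ⟨z, hz, rfl⟩ := hy
      have h1 : f x ∈ f '' Δ' := ⟨x, hx, rfl⟩
      rw [hfcls] at h1
      have h2 := hlt z (f x) ((memD z).1 hz) h1
      have h3 := f.symm.strictMono h2
      exact (by simpa using h3 : x < f.symm z)

end Core

section Main
set_option linter.unusedSectionVars false

variable {G : Subgroup (Ω ≃o Ω)} {r : Ω → Ω → Prop}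

lemma spine_class_nontrivial (htrans : IsTransitive G) (hsp : SpineMem G r) (β : Ω) :
    ∃ x, r β x ∧ x ≠ β := by
  obtain ⟨a, b, hab, rfl⟩ := hsp
  obtain ⟨k, hk, hka⟩ := htrans a β
  have h1 : Vcong G a b a b := vcong_self G a b
  have h2 : Vcong G a b (k a) (k b) := (vcong_icc G a b).2.2 k hk a b h1
  rw [hka] at h2
  by_cases hkb : k b = β
  · exact absurd (k.injective (hka.trans hkb.symm)) hab
  · exact ⟨k b, h2, hkb⟩

end Main


/-- (Lemma 4.2 of the paper.) -/
theorem lemma_forty {Ω : Type*} [LinearOrder Ω]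
    (G : Subgroup (Ω ≃o Ω)) (hlat : SublatticeClosed G)
    (htrans : IsTransitive G) (hample : Ample G) (hnomin : SpineNoMin G)
    (Δ : Set Ω) (hΔ : InT G Δ) (h : Ω ≃o Ω) (hh : h ∈ Qset G Δ) :
    (∀ Δ' : Set Ω, InT G Δ' → Δ' ⊆ Δ → Δ' ≠ Δ → h '' Δ' ≠ Δ' →
      ∀ g : Ω ≃o Ω, g ∈ rst G Δ' → g ≠ 1 →
        pcomm h⁻¹ (aconj h g) ≠ 1 ∧
        ∀ f ∈ G, pcomm (pcomm h⁻¹ (aconj h g)) f = 1 → f '' Δ' = Δ') ∧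
    (∀ β ∈ supp h, ∀ f ∈ G, f β = β ∨
      ∃ g ∈ rst G Δ, pcomm (pcomm h⁻¹ (aconj h g)) f ≠ 1) := by
  obtain ⟨⟨hhG, hsupph⟩, α, hαΔ, hΔK⟩ := hh
  constructor
  · -- part (a)
    intro Δ' hΔ'T _hsub _hne hhne g hg hgne
    obtain ⟨r', hr'sp, δ, hδ⟩ := hΔ'T
    have hicc : IsConvexCongruence G r' := by
      obtain ⟨a, b, hab, h'⟩ := hr'sp
      rw [h']; exact vcong_icc G a b
    exact core hicc δ hδ hhG hg.1 hg.2 hgne hhne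
  · -- part (b)
    intro β hβ f hfG
    by_cases hfβ : f β = β
    · exact Or.inl hfβ
    right
    have hβΔ : β ∈ Δ := hsupph hβ
    have hKicc : IsConvexCongruence G (Vcong G α (h α)) := vcong_icc G α (h α)
    have hKαβ : Vcong G α (h α) α β := by rw [hΔK] at hβΔ; exact hβΔ
    have hΔβ : Δ = {γ | Vcong G α (h α) β γ} := by
      rw [hΔK]; exact class_eq hKicc hKαβ
    -- h β ∈ Δ
    have hKαhα : Vcong G α (h α) α (h α) := vcong_self G α (h α)
    have hKhαhβ : Vcong G α (h α) (h α) (h β) := hKicc.2.2 h hhG α β hKαβ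
    have hKβhβ : Vcong G α (h α) β (h β) :=
      hKicc.1.trans (hKicc.1.symm hKαβ) (hKicc.1.trans hKαhα hKhαhβ)
    have hrleK : relLe (Vcong G β (h β)) (Vcong G α (h α)) := vcong_min hKicc hKβhβ
    have hrsp : SpineMem G (Vcong G β (h β)) := ⟨β, h β, Ne.symm hβ, rfl⟩
    have hssp : SpineMem G (Vcong G β (f β)) := ⟨β, f β, Ne.symm hfβ, rfl⟩
    have key : ∀ m : Ω → Ω → Prop, SpineMem G m →
        relLe m (Vcong G β (h β)) → relLe m (Vcong G β (f β)) →
        ∃ g ∈ rst G Δ, pcomm (pcomm h⁻¹ (aconj h g)) f ≠ 1 := by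
      intro m hmsp hmr hmf
      obtain ⟨r', hr'sp, hler, hner⟩ := hnomin m hmsp
      have hr'icc : IsConvexCongruence G r' := by
        obtain ⟨a, b, hab, h'⟩ := hr'sp
        rw [h']; exact vcong_icc G a b
      set Δ' : Set Ω := {γ | r' β γ} with hΔ'def
      have hβΔ' : β ∈ Δ' := hr'icc.1.refl β
      have hhβn : h β ∉ Δ' := by
        intro hmem
        have h1 : relLe (Vcong G β (h β)) r' := vcong_min hr'icc hmem
        exact hner (relLe_antisymm hler (fun x y hxy => h1 x y (hmr x y hxy)))
      have hfβn : f β ∉ Δ' := by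
        intro hmem
        have h1 : relLe (Vcong G β (f β)) r' := vcong_min hr'icc hmem
        exact hner (relLe_antisymm hler (fun x y hxy => h1 x y (hmf x y hxy)))
      have hsubΔ : Δ' ⊆ Δ := by
        intro x hx
        rw [hΔβ]
        exact hrleK β x (hmr β x (hler β x hx))
      have hInT : InT G Δ' := ⟨r', hr'sp, β, rfl⟩
      obtain ⟨g, ⟨hgG', hgsupp⟩, α', hα'mem, hα'eq⟩ := hample Δ' hInT
      have hg1 : g ≠ 1 := by
        intro hg1
        rw [hg1] at hα'eq
        obtain ⟨x, hx1, hx2⟩ := spine_class_nontrivial htrans hr'sp β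
        have hxΔ' : x ∈ Δ' := hx1
        have e1 : x = α' := by
          have hx' := hxΔ'
          rw [hα'eq] at hx'
          exact (hx' (fun a b => a = b) (eq_icc G) rfl).symm
        have e2 : β = α' := by
          have hx' := hβΔ'
          rw [hα'eq] at hx'
          exact (hx' (fun a b => a = b) (eq_icc G) rfl).symm
        exact hx2 (e1.trans e2.symm)
      have hAne : h '' Δ' ≠ Δ' := by
        intro heq
        exact hhβn (heq ▸ ⟨β, hβΔ', rfl⟩)
      obtain ⟨_, hcent⟩ := core hr'icc β hΔ'def hhG hgG' hgsupp hg1 hAne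
      refine ⟨g, ⟨hgG', fun x hx => hsubΔ (hgsupp hx)⟩, ?_⟩
      intro hp1
      have hfim := hcent f hfG hp1
      exact hfβn (hfim ▸ ⟨β, hβΔ', rfl⟩)
    rcases icc_comparable htrans (vcong_icc G β (h β)) (vcong_icc G β (f β)) with hm | hm
    · exact key (Vcong G β (h β)) hrsp (fun x y hxy => hxy) hm
    · exact key (Vcong G β (f β)) hssp hm (fun x y hxy => hxy)


end LPerm
end
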